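/- Verification of the second component of the identity fₓ + G·uₓ = L·ṽₓ: for differentiable h > 0, u_m, αᵢ, b, one has ∂ₓ(hu_m² + gh²/2 + Σᵢ hαᵢ²/(2i+1)) + gh·∂ₓb = h·∂ₓE + u_m·∂ₓ(hu_m) - Σᵢ (h²αᵢ/(2i+1))·∂ₓ(αᵢ/h), where E = u_m²/2 + g(h+b) + (3/2)Σᵢ αᵢ²/(2i+1). -/

import Mathlib

/-!
Both sides are expanded by the product and quotient rules. The momentum and hydrostatic terms
`h u_m² + g h²/2` match `h ∂ₓ(u_m²/2 + g (h + b)) + u_m ∂ₓ(h u_m)` directly. For each shear mode `α`,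
the quotient rule gives `h² ∂ₓ(α/h) = h ∂ₓα - α ∂ₓh`, whence `∂ₓ(h α²) = (3/2) h ∂ₓ(α²) - h² α ∂ₓ(α/h)`;
dividing by `2i+3` and summing over the modes gives the claim.
-/

open Finset

section

variable {h u a b : ℝ → ℝ} {x : ℝ}

theorem deriv_momentum_flux_eq (g : ℝ) (hh : DifferentiableAt ℝ h x)
    (hu : DifferentiableAt ℝ u x) (hb : DifferentiableAt ℝ b x) :
    deriv (fun y => h y * u y ^ 2 + g * h y ^ 2 / 2) x + g * h x * deriv b x
      = h x * deriv (fun y => u y ^ 2 / 2 + g * (h y + b y)) x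
        + u x * deriv (fun y => h y * u y) x := by
  have Hh := hh.hasDerivAt
  have Hu := hu.hasDerivAt
  rw [((Hh.fun_mul (Hu.fun_pow 2)).fun_add (((Hh.fun_pow 2).const_mul g).div_const 2)).deriv,
    (((Hu.fun_pow 2).div_const 2).fun_add ((Hh.fun_add hb.hasDerivAt).const_mul g)).deriv,
    (Hh.fun_mul Hu).deriv]
  ring

theorem deriv_mul_sq_div_eq (c : ℝ) (hh : DifferentiableAt ℝ h x)
    (ha : DifferentiableAt ℝ a x) (hx : h x ≠ 0) :
    deriv (fun y => h y * a y ^ 2 / c) x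
      = h x * (3 / 2 * deriv (fun y => a y ^ 2 / c) x)
        - h x ^ 2 * a x / c * deriv (fun y => a y / h y) x := by
  have Hh := hh.hasDerivAt
  have Ha := ha.hasDerivAt
  rw [((Hh.fun_mul (Ha.fun_pow 2)).div_const c).deriv, ((Ha.fun_pow 2).div_const c).deriv,
    (Ha.fun_div Hh hx).deriv]
  field_simp
  ring

end

theorem swlme_second_component_identity_general
    (N : ℕ) (g : ℝ)
    (h um b : ℝ → ℝ) (α : ℕ → ℝ → ℝ)
    (hh : Differentiable ℝ h) (hum : Differentiable ℝ um) (hb : Differentiable ℝ b)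
    (hα : ∀ i, Differentiable ℝ (α i))
    (hpos : ∀ x, 0 < h x) (x : ℝ) :
    deriv (fun y => h y * (um y) ^ 2 + g * (h y) ^ 2 / 2 +
        ∑ i ∈ Finset.range N, h y * (α (i + 1) y) ^ 2 / (2 * (i : ℝ) + 3)) x +
      g * h x * deriv b x
    = h x * deriv (fun y => (um y) ^ 2 / 2 + g * (h y + b y) +
          (3 / 2) * ∑ i ∈ Finset.range N, (α (i + 1) y) ^ 2 / (2 * (i : ℝ) + 3)) x +
      um x * deriv (fun y => h y * um y) x -
      ∑ i ∈ Finset.range N,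
        (h x) ^ 2 * α (i + 1) x / (2 * (i : ℝ) + 3) *
          deriv (fun y => α (i + 1) y / h y) x := by
  rw [deriv_fun_add (f := fun y => h y * um y ^ 2 + g * h y ^ 2 / 2) (by fun_prop) (by fun_prop),
    deriv_fun_sum (fun i _ => by fun_prop),
    deriv_fun_add (f := fun y => um y ^ 2 / 2 + g * (h y + b y)) (by fun_prop) (by fun_prop),
    deriv_const_mul _ (by fun_prop),
    deriv_fun_sum (fun i _ => by fun_prop)]
  simp only [fun i : ℕ => deriv_mul_sq_div_eq (2 * (i : ℝ) + 3) (hh x) (hα (i + 1) x) (hpos x).ne']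
  rw [sum_sub_distrib, ← mul_sum, ← mul_sum]
  linear_combination deriv_momentum_flux_eq g (hh x) (hum x) (hb x)

/-- Verification of the second component of `fₓ + G uₓ = L ṽₓ` for the SWLME:
`∂ₓ(h u_m² + g h²/2 + Σᵢ h αᵢ²/(2i+1)) + g h ∂ₓ b
  = h ∂ₓ E + u_m ∂ₓ(h u_m) - Σᵢ (h² αᵢ/(2i+1)) ∂ₓ(αᵢ/h)`,
where `E = u_m²/2 + g (h + b) + (3/2) Σᵢ αᵢ²/(2i+1)`. -/
theorem swlme_second_component_identity
    (N : ℕ) (hN : 1 ≤ N) (g : ℝ) (hg : 0 < g)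
    (h um b : ℝ → ℝ) (α : ℕ → ℝ → ℝ)
    (hh : Differentiable ℝ h) (hum : Differentiable ℝ um) (hb : Differentiable ℝ b)
    (hα : ∀ i, Differentiable ℝ (α i))
    (hpos : ∀ x, 0 < h x) (x : ℝ) :
    deriv (fun y => h y * (um y) ^ 2 + g * (h y) ^ 2 / 2 +
        ∑ i ∈ Finset.range N, h y * (α (i + 1) y) ^ 2 / (2 * (i : ℝ) + 3)) x +
      g * h x * deriv b x
    = h x * deriv (fun y => (um y) ^ 2 / 2 + g * (h y + b y) +
          (3 / 2) * ∑ i ∈ Finset.range N, (α (i + 1) y) ^ 2 / (2 * (i : ℝ) + 3)) x +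
      um x * deriv (fun y => h y * um y) x -
      ∑ i ∈ Finset.range N,
        (h x) ^ 2 * α (i + 1) x / (2 * (i : ℝ) + 3) *
          deriv (fun y => α (i + 1) y / h y) x :=
  swlme_second_component_identity_general N g h um b α hh hum hb hα hpos x
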